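/- Let A_1, ..., A_d be positive semidefinite n×n matrices and r ≥ 1. Then for every unitarily invariant norm, |||(Σ_{k=1}^d A_k)^r||| ≤ d^{r-1} |||Σ_{k=1}^d A_k^r|||. -/

import Mathlib

/-!
Write `S = ∑ A_k` and `B = ∑ A_k^r`. For a unit vector `x`, Jensen's inequality in the
eigenbasis of `A_k` gives `⟨A_k x, x⟩^r ≤ ⟨A_k^r x, x⟩`, and the power-mean inequality then gives
`⟨S x, x⟩^r ≤ d^(r-1) ⟨B x, x⟩`. Choosing `x` by the Courant–Fischer dimension count transfers this
to the `j`-th smallest eigenvalues: `λ_j(S)^r ≤ d^(r-1) λ_j(B)`. A unitarily invariant norm of a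
Hermitian matrix only sees its eigenvalues, and is monotone in them when they are nonnegative,
since a diagonal contraction is the average of two diagonal unitaries.
-/

open scoped Matrix ComplexOrder

/-- Real power of a matrix via the continuous functional calculus (for Hermitian matrices). -/
noncomputable def mpow {m : Type*} [Fintype m] [DecidableEq m]
    (A : Matrix m m ℂ) (t : ℝ) : Matrix m m ℂ :=
  cfc (fun x : ℝ => x ^ t) A

/-- The operator (spectral) norm of a matrix. -/
noncomputable def opNorm {m : Type*} [Fintype m] [DecidableEq m] (A : Matrix m m ℂ) : ℝ :=
  ‖Matrix.toEuclideanCLM (𝕜 := ℂ) A‖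

/-- The Schatten `p`-norm of a matrix: `(tr |A|^p)^{1/p}`. -/
noncomputable def schattenNorm {m : Type*} [Fintype m] [DecidableEq m]
    (p : ℝ) (A : Matrix m m ℂ) : ℝ :=
  ((mpow (Aᴴ * A) (p / 2)).trace.re) ^ (1 / p)

/-- The spherical Schatten `p`-norm of a tuple: `(tr (∑ S_i* S_i)^{p/2})^{1/p}`. -/
noncomputable def sphSchattenNorm {m : Type*} [Fintype m] [DecidableEq m] {d : ℕ}
    (p : ℝ) (T : Fin d → Matrix m m ℂ) : ℝ :=
  ((mpow (∑ i, (T i)ᴴ * T i) (p / 2)).trace.re) ^ (1 / p)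

open Matrix

structure IsUnitarilyInvariantSeminorm {m : Type*} [Fintype m] [DecidableEq m]
    (N : Matrix m m ℂ → ℝ) : Prop where
  map_add_le : ∀ X Y, N (X + Y) ≤ N X + N Y
  map_smul : ∀ (c : ℂ) X, N (c • X) = ‖c‖ * N X
  map_unitary_mul_mul : ∀ (U W : unitaryGroup m ℂ) X, N (U * X * W) = N X

section UnitarilyInvariant

variable {m : Type*} [Fintype m] [DecidableEq m]

lemma permMatrix_mem_unitaryGroup {α : Type*} [CommRing α] [StarRing α] (σ : Equiv.Perm m) :
    σ.permMatrix α ∈ unitaryGroup m α := by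
  rw [mem_unitaryGroup_iff, star_eq_conjTranspose, conjTranspose_permMatrix, ← permMatrix_mul,
    inv_mul_cancel, permMatrix_one]

lemma permMatrix_mul_diagonal_mul_permMatrix_inv {α : Type*} [NonAssocSemiring α] (σ : Equiv.Perm m)
    (v : m → α) : σ.permMatrix α * diagonal v * σ⁻¹.permMatrix α = diagonal (v ∘ σ) := by
  rw [PEquiv.toMatrix_toPEquiv_mul, PEquiv.mul_toMatrix_toPEquiv, submatrix_submatrix]
  exact submatrix_diagonal_equiv v σ

lemma diagonal_mem_unitaryGroup {α : Type*} [CommRing α] [StarRing α] {u : m → α}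
    (hu : ∀ i, u i * star (u i) = 1) : diagonal u ∈ unitaryGroup m α := by
  rw [mem_unitaryGroup_iff, star_eq_conjTranspose, diagonal_conjTranspose, diagonal_mul_diagonal]
  simp only [Pi.star_apply, hu, diagonal_one]

/-- `k = ((k + i√(1 - k²)) + (k - i√(1 - k²))) / 2`, entrywise. -/
lemma exists_diagonal_ofReal_eq_midpoint_unitary {k : m → ℝ} (hk : ∀ i, |k i| ≤ 1) :
    ∃ U : unitaryGroup m ℂ, diagonal (fun i => (k i : ℂ))
      = (2⁻¹ : ℂ) • ((U : Matrix m m ℂ) + star (U : Matrix m m ℂ)) := by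
  set u : m → ℂ := fun i => k i + Real.sqrt (1 - k i ^ 2) * Complex.I
  have hu : ∀ i, u i * star (u i) = 1 := by
    intro i
    have h1 : (0 : ℝ) ≤ 1 - k i ^ 2 := by nlinarith [abs_le.mp (hk i), sq_abs (k i)]
    rw [Complex.star_def, Complex.mul_conj, Complex.normSq_add_mul_I, Real.sq_sqrt h1]
    norm_num
  refine ⟨⟨diagonal u, diagonal_mem_unitaryGroup hu⟩, ?_⟩
  simp only [star_eq_conjTranspose, diagonal_conjTranspose, diagonal_add, ← diagonal_smul]
  congr 1
  ext i
  rw [Pi.smul_apply, smul_eq_mul, Pi.star_apply, Complex.star_def, Complex.add_conj]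
  simp [u]

namespace IsUnitarilyInvariantSeminorm

variable {N : Matrix m m ℂ → ℝ}

lemma map_unitary_mul (hN : IsUnitarilyInvariantSeminorm N) (U : unitaryGroup m ℂ)
    (X : Matrix m m ℂ) : N (U * X) = N X := by
  simpa using hN.map_unitary_mul_mul U 1 X

lemma map_conjStarAlgAut (hN : IsUnitarilyInvariantSeminorm N) (U : unitaryGroup m ℂ)
    (X : Matrix m m ℂ) : N (Unitary.conjStarAlgAut ℂ _ U X) = N X :=
  hN.map_unitary_mul_mul U (star U) X

lemma map_diagonal_comp_perm (hN : IsUnitarilyInvariantSeminorm N) (σ : Equiv.Perm m)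
    (v : m → ℂ) : N (diagonal (v ∘ σ)) = N (diagonal v) := by
  rw [← permMatrix_mul_diagonal_mul_permMatrix_inv]
  exact hN.map_unitary_mul_mul ⟨_, permMatrix_mem_unitaryGroup σ⟩
    ⟨_, permMatrix_mem_unitaryGroup σ⁻¹⟩ _

lemma map_diagonal_ofReal_mul_le (hN : IsUnitarilyInvariantSeminorm N) {k : m → ℝ}
    (hk : ∀ i, |k i| ≤ 1) (X : Matrix m m ℂ) :
    N (diagonal (fun i => (k i : ℂ)) * X) ≤ N X := by
  obtain ⟨U, hU⟩ := exists_diagonal_ofReal_eq_midpoint_unitary hk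
  calc N (diagonal (fun i => (k i : ℂ)) * X)
      = 2⁻¹ * N (U * X + (star U : unitaryGroup m ℂ) * X) := by
        rw [hU, smul_mul_assoc, add_mul, hN.map_smul, Unitary.coe_star]
        norm_num
    _ ≤ 2⁻¹ * (N X + N X) := by
        grw [hN.map_add_le, hN.map_unitary_mul, hN.map_unitary_mul]
    _ = N X := by ring

lemma map_diagonal_ofReal_mono (hN : IsUnitarilyInvariantSeminorm N) {v w : m → ℝ}
    (hv : 0 ≤ v) (hvw : v ≤ w) :
    N (diagonal (fun i => (v i : ℂ))) ≤ N (diagonal (fun i => (w i : ℂ))) := by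
  have hk : ∀ i, |v i / w i| ≤ 1 := fun i => by
    rw [abs_div, abs_of_nonneg (hv i), abs_of_nonneg ((hv i).trans (hvw i))]
    exact div_le_one_of_le₀ (hvw i) ((hv i).trans (hvw i))
  -- where `w i = 0` also `v i = 0`, so the junk value `v i / 0 = 0` is harmless
  have hfactor : diagonal (fun i => (v i : ℂ))
      = diagonal (fun i => ((v i / w i : ℝ) : ℂ)) * diagonal (fun i => (w i : ℂ)) := by
    rw [diagonal_mul_diagonal]
    congr 1
    ext i
    rcases eq_or_ne (w i) 0 with hw | hw
    · simp [hw, le_antisymm (by simpa [hw] using hvw i) (hv i)]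
    · push_cast
      field_simp
  rw [hfactor]
  exact hN.map_diagonal_ofReal_mul_le hk _

lemma map_cfc_le (hN : IsUnitarilyInvariantSeminorm N) {X Y : Matrix m m ℂ}
    (hX : X.IsHermitian) (hY : Y.IsHermitian) {f g : ℝ → ℝ} (σ τ : Equiv.Perm m)
    (hf : ∀ i, 0 ≤ f (hX.eigenvalues i))
    (hfg : ∀ i, f (hX.eigenvalues (σ i)) ≤ g (hY.eigenvalues (τ i))) :
    N (cfc f X) ≤ N (cfc g Y) :=
  calc N (cfc f X) = N (diagonal fun i => (f (hX.eigenvalues (σ i)) : ℂ)) := by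
        rw [hX.cfc_eq, IsHermitian.cfc, hN.map_conjStarAlgAut,
          ← hN.map_diagonal_comp_perm σ (RCLike.ofReal ∘ f ∘ hX.eigenvalues)]
        rfl
    _ ≤ N (diagonal fun i => (g (hY.eigenvalues (τ i)) : ℂ)) :=
        hN.map_diagonal_ofReal_mono (fun i => hf (σ i)) hfg
    _ = N (cfc g Y) := by
        rw [hY.cfc_eq, IsHermitian.cfc, hN.map_conjStarAlgAut,
          ← hN.map_diagonal_comp_perm τ (RCLike.ofReal ∘ g ∘ hY.eigenvalues)]
        rfl

end IsUnitarilyInvariantSeminorm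

end UnitarilyInvariant

section QuadraticForm

variable {m : Type*} [Fintype m]

noncomputable def quadForm (M : Matrix m m ℂ) (x : m → ℂ) : ℝ :=
  (star x ⬝ᵥ M *ᵥ x).re

lemma quadForm_sum {ι : Type*} (s : Finset ι) (M : ι → Matrix m m ℂ) (x : m → ℂ) :
    quadForm (∑ k ∈ s, M k) x = ∑ k ∈ s, quadForm (M k) x := by
  simp only [quadForm, sum_mulVec, dotProduct_sum, Complex.re_sum]

lemma re_star_dotProduct_self (x : m → ℂ) :
    (star x ⬝ᵥ x).re = ∑ i, Complex.normSq (x i) := by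
  simp [dotProduct, Complex.re_sum, Complex.normSq_apply]

lemma Submodule.exists_sum_normSq_eq_one {W : Submodule ℂ (m → ℂ)} (hW : W ≠ ⊥) :
    ∃ u ∈ W, ∑ i, Complex.normSq (u i) = 1 := by
  obtain ⟨x, hxW, hx⟩ := W.ne_bot_iff.mp hW
  set s := ∑ i, Complex.normSq (x i)
  have hs : 0 < s := by
    obtain ⟨i, hi⟩ := Function.ne_iff.mp hx
    exact Finset.sum_pos' (fun i _ => Complex.normSq_nonneg _)
      ⟨i, Finset.mem_univ i, Complex.normSq_pos.mpr hi⟩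
  refine ⟨((Real.sqrt s)⁻¹ : ℂ) • x, W.smul_mem _ hxW, ?_⟩
  simp only [Pi.smul_apply, smul_eq_mul, Complex.normSq_mul, ← Finset.mul_sum]
  rw [← Complex.ofReal_inv, Complex.normSq_ofReal, ← sq, inv_pow, Real.sq_sqrt hs.le,
    inv_mul_cancel₀ hs.ne']

variable [DecidableEq m]

lemma sum_normSq_unitary_mulVec (U : unitaryGroup m ℂ) (x : m → ℂ) :
    ∑ i, Complex.normSq (((U : Matrix m m ℂ) *ᵥ x) i) = ∑ i, Complex.normSq (x i) := by
  rw [← re_star_dotProduct_self, ← re_star_dotProduct_self, star_mulVec, ← dotProduct_mulVec,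
    mulVec_mulVec, ← star_eq_conjTranspose, Unitary.coe_star_mul_self, one_mulVec]

lemma quadForm_conjStarAlgAut_diagonal (U : unitaryGroup m ℂ) (e : m → ℝ) (x : m → ℂ) :
    quadForm (Unitary.conjStarAlgAut ℂ _ U (diagonal (RCLike.ofReal ∘ e))) x
      = ∑ i, Complex.normSq ((star (U : Matrix m m ℂ) *ᵥ x) i) * e i := by
  set y := star (U : Matrix m m ℂ) *ᵥ x
  have hy : star x ᵥ* (U : Matrix m m ℂ) = star y := by
    rw [star_mulVec, ← star_eq_conjTranspose, star_star]
  rw [quadForm, Unitary.conjStarAlgAut_apply, ← mulVec_mulVec, ← mulVec_mulVec,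
    dotProduct_mulVec, hy]
  simp only [dotProduct, mulVec_diagonal, Function.comp_apply, Complex.re_sum]
  refine Finset.sum_congr rfl fun i _ => ?_
  rw [Pi.star_apply, Complex.star_def, mul_left_comm, ← Complex.normSq_eq_conj_mul_self]
  simp [mul_comm]

namespace Matrix.IsHermitian

variable {A : Matrix m m ℂ}

/-- `|⟨x, e_i⟩|²` for the `i`-th vector `e_i` of the chosen eigenbasis of `A`. -/
noncomputable def spectralWeight (hA : A.IsHermitian) (x : m → ℂ) (i : m) : ℝ :=
  Complex.normSq ((star (hA.eigenvectorUnitary : Matrix m m ℂ) *ᵥ x) i)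

variable (hA : A.IsHermitian)

lemma sum_spectralWeight (x : m → ℂ) :
    ∑ i, hA.spectralWeight x i = ∑ i, Complex.normSq (x i) := by
  simp only [spectralWeight, ← Unitary.coe_star]
  exact sum_normSq_unitary_mulVec _ x

lemma quadForm_cfc (f : ℝ → ℝ) (x : m → ℂ) :
    quadForm (cfc f A) x = ∑ i, hA.spectralWeight x i * f (hA.eigenvalues i) := by
  rw [hA.cfc_eq, IsHermitian.cfc, quadForm_conjStarAlgAut_diagonal]
  rfl

lemma quadForm_eq (x : m → ℂ) :
    quadForm A x = ∑ i, hA.spectralWeight x i * hA.eigenvalues i := by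
  conv_lhs => rw [← cfc_id' ℝ A hA.isSelfAdjoint]
  exact hA.quadForm_cfc id x

end Matrix.IsHermitian

namespace Matrix.PosSemidef

variable {A : Matrix m m ℂ}

lemma quadForm_nonneg (hA : A.PosSemidef) (x : m → ℂ) : 0 ≤ quadForm A x := by
  rw [hA.1.quadForm_eq]
  exact Finset.sum_nonneg fun i _ =>
    mul_nonneg (Complex.normSq_nonneg _) (hA.eigenvalues_nonneg i)

/-- Jensen's inequality for the weights `hA.1.spectralWeight x`, which sum to `1`. -/
lemma quadForm_rpow_le (hA : A.PosSemidef) {r : ℝ} (hr : 1 ≤ r) {x : m → ℂ}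
    (hx : ∑ i, Complex.normSq (x i) = 1) :
    quadForm A x ^ r ≤ quadForm (mpow A r) x := by
  rw [hA.1.quadForm_eq, mpow, hA.1.quadForm_cfc]
  exact Real.rpow_arith_mean_le_arith_mean_rpow _ _ _ (fun i _ => Complex.normSq_nonneg _)
    ((hA.1.sum_spectralWeight x).trans hx) (fun i _ => hA.eigenvalues_nonneg i) hr

end Matrix.PosSemidef

lemma quadForm_sum_rpow_le {ι : Type*} [Fintype ι] {A : ι → Matrix m m ℂ}
    (hA : ∀ k, (A k).PosSemidef) {r : ℝ} (hr : 1 ≤ r) {x : m → ℂ}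
    (hx : ∑ i, Complex.normSq (x i) = 1) :
    quadForm (∑ k, A k) x ^ r
      ≤ (Fintype.card ι : ℝ) ^ (r - 1) * quadForm (∑ k, mpow (A k) r) x := by
  rw [quadForm_sum, quadForm_sum]
  calc (∑ k, quadForm (A k) x) ^ r
      ≤ (Fintype.card ι : ℝ) ^ (r - 1) * ∑ k, quadForm (A k) x ^ r := by
        simpa using Real.rpow_sum_le_const_mul_sum_rpow_of_nonneg Finset.univ hr
          fun k _ => (hA k).quadForm_nonneg x
    _ ≤ _ := by
        gcongr with k
        exact (hA k).quadForm_rpow_le hr hx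

end QuadraticForm

section Spectral

lemma le_sum_mul_of_eq_zero_of_lt {ι : Type*} [Fintype ι] [LinearOrder ι] {μ p : ι → ℝ}
    (hμ : Monotone μ) (hp : 0 ≤ p) (hp1 : ∑ i, p i = 1) {j : ι} (hj : ∀ i < j, p i = 0) :
    μ j ≤ ∑ i, p i * μ i := by
  have h : ∑ i, p i * μ j ≤ ∑ i, p i * μ i := Finset.sum_le_sum fun i _ => by
    rcases lt_or_ge i j with hij | hij
    · simp [hj i hij]
    · exact mul_le_mul_of_nonneg_left (hμ hij) (hp i)
  rwa [← Finset.sum_mul, hp1, one_mul] at h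

lemma sum_mul_le_of_eq_zero_of_gt {ι : Type*} [Fintype ι] [LinearOrder ι] {μ p : ι → ℝ}
    (hμ : Monotone μ) (hp : 0 ≤ p) (hp1 : ∑ i, p i = 1) {j : ι} (hj : ∀ i, j < i → p i = 0) :
    ∑ i, p i * μ i ≤ μ j := by
  have h : ∑ i, p i * μ i ≤ ∑ i, p i * μ j := Finset.sum_le_sum fun i _ => by
    rcases lt_or_ge j i with hij | hij
    · simp [hj i hij]
    · exact mul_le_mul_of_nonneg_left (hμ hij) (hp i)
  rwa [← Finset.sum_mul, hp1, one_mul] at h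

variable {n : ℕ}

/-- Dimension count: these are `j + (n - 1 - j) < n` linear conditions. -/
lemma exists_unit_mulVec_eq_zero (P Q : Matrix (Fin n) (Fin n) ℂ) (j : Fin n) :
    ∃ u : Fin n → ℂ, ∑ i, Complex.normSq (u i) = 1 ∧
      (∀ i < j, (P *ᵥ u) i = 0) ∧ ∀ i, j < i → (Q *ᵥ u) i = 0 := by
  let Φ : (Fin n → ℂ) →ₗ[ℂ] (Set.Iio j → ℂ) × (Set.Ioi j → ℂ) :=
    (LinearMap.pi fun i : Set.Iio j => (LinearMap.proj (R := ℂ) i.1).comp P.mulVecLin).prod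
      (LinearMap.pi fun i : Set.Ioi j => (LinearMap.proj (R := ℂ) i.1).comp Q.mulVecLin)
  have hker : LinearMap.ker Φ ≠ ⊥ := by
    apply LinearMap.ker_ne_bot_of_finrank_lt
    simp only [Module.finrank_prod, Module.finrank_fintype_fun_eq_card, Fintype.card_ofFinset,
      Finset.mem_Iio, Set.mem_Iio, Finset.mem_Ioi, Set.mem_Ioi, implies_true, Fin.card_Iio,
      Fin.card_Ioi, Fintype.card_fin]
    omega
  obtain ⟨u, hu, hunit⟩ := Submodule.exists_sum_normSq_eq_one hker
  have hΦ : Φ u = 0 := hu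
  exact ⟨u, hunit, fun i hi => congrFun (congrArg Prod.fst hΦ) ⟨i, hi⟩,
    fun i hi => congrFun (congrArg Prod.snd hΦ) ⟨i, hi⟩⟩

/-- Courant–Fischer. `Tuple.sort` lists the eigenvalues in increasing order. -/
lemma Matrix.IsHermitian.exists_unit_eigenvalues_sort_le_quadForm
    {S B : Matrix (Fin n) (Fin n) ℂ} (hS : S.IsHermitian) (hB : B.IsHermitian) (j : Fin n) :
    ∃ u : Fin n → ℂ, ∑ i, Complex.normSq (u i) = 1 ∧
      hS.eigenvalues (Tuple.sort hS.eigenvalues j) ≤ quadForm S u ∧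
      quadForm B u ≤ hB.eigenvalues (Tuple.sort hB.eigenvalues j) := by
  set σ := Tuple.sort hS.eigenvalues
  set τ := Tuple.sort hB.eigenvalues
  obtain ⟨u, hu, hSu, hBu⟩ := exists_unit_mulVec_eq_zero
    ((star (hS.eigenvectorUnitary : Matrix (Fin n) (Fin n) ℂ)).submatrix σ id)
    ((star (hB.eigenvectorUnitary : Matrix (Fin n) (Fin n) ℂ)).submatrix τ id) j
  have hσ : ∑ i, hS.spectralWeight u (σ i) = 1 := by
    rw [Equiv.sum_comp σ (hS.spectralWeight u), hS.sum_spectralWeight, hu]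
  have hτ : ∑ i, hB.spectralWeight u (τ i) = 1 := by
    rw [Equiv.sum_comp τ (hB.spectralWeight u), hB.sum_spectralWeight, hu]
  refine ⟨u, hu, ?_, ?_⟩
  · rw [hS.quadForm_eq, ← Equiv.sum_comp σ]
    exact le_sum_mul_of_eq_zero_of_lt (Tuple.monotone_sort hS.eigenvalues)
      (fun i => Complex.normSq_nonneg _) hσ fun i hi => Complex.normSq_eq_zero.mpr (hSu i hi)
  · rw [hB.quadForm_eq, ← Equiv.sum_comp τ]
    exact sum_mul_le_of_eq_zero_of_gt (Tuple.monotone_sort hB.eigenvalues)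
      (fun i => Complex.normSq_nonneg _) hτ fun i hi => Complex.normSq_eq_zero.mpr (hBu i hi)

end Spectral

theorem unitarilyInvariant_rpow_sum_le_of_one_le_general {n d : ℕ}
    (A : Fin d → Matrix (Fin n) (Fin n) ℂ) (hA : ∀ k, (A k).PosSemidef)
    (r : ℝ) (hr : 1 ≤ r)
    (N : Matrix (Fin n) (Fin n) ℂ → ℝ)
    (Nadd : ∀ X Y, N (X + Y) ≤ N X + N Y)
    (Nsmul : ∀ (c : ℂ) X, N (c • X) = ‖c‖ * N X)
    (Nui : ∀ (U W : Matrix.unitaryGroup (Fin n) ℂ) X,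
      N ((U : Matrix (Fin n) (Fin n) ℂ) * X * (W : Matrix (Fin n) (Fin n) ℂ)) = N X) :
    N (mpow (∑ k, A k) r) ≤ (d : ℝ) ^ (r - 1) * N (∑ k, mpow (A k) r) := by
  have hN : IsUnitarilyInvariantSeminorm N := ⟨Nadd, Nsmul, Nui⟩
  have hS : (∑ k, A k).PosSemidef := posSemidef_sum _ fun k _ => hA k
  have hB : (∑ k, mpow (A k) r).IsHermitian := isSelfAdjoint_sum _ fun k _ => cfc_predicate _ _
  have hc : (0 : ℝ) ≤ (d : ℝ) ^ (r - 1) := by positivity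
  have hdom : ∀ j, hS.1.eigenvalues (Tuple.sort hS.1.eigenvalues j) ^ r
      ≤ (d : ℝ) ^ (r - 1) * hB.eigenvalues (Tuple.sort hB.eigenvalues j) := fun j => by
    obtain ⟨u, hu, hSu, hBu⟩ := hS.1.exists_unit_eigenvalues_sort_le_quadForm hB j
    calc _ ≤ quadForm (∑ k, A k) u ^ r :=
          Real.rpow_le_rpow (hS.eigenvalues_nonneg _) hSu (by linarith)
      _ ≤ (d : ℝ) ^ (r - 1) * quadForm (∑ k, mpow (A k) r) u := by
          simpa using quadForm_sum_rpow_le hA hr hu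
      _ ≤ _ := by gcongr
  calc N (mpow (∑ k, A k) r)
      ≤ N (cfc (fun x => (d : ℝ) ^ (r - 1) * x) (∑ k, mpow (A k) r)) :=
        hN.map_cfc_le hS.1 hB _ _ (fun i => Real.rpow_nonneg (hS.eigenvalues_nonneg i) r) hdom
    _ = (d : ℝ) ^ (r - 1) * N (∑ k, mpow (A k) r) := by
        rw [cfc_const_mul_id _ _ hB.isSelfAdjoint, ← Complex.coe_smul, hN.map_smul,
          Complex.norm_real, Real.norm_of_nonneg hc]

/-- For positive semidefinite `A_1, …, A_d` and `r ≥ 1`, every unitarily invariant norm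
satisfies `|||(∑ A_k)^r||| ≤ d^(r-1) |||∑ A_k^r|||`. -/
theorem unitarilyInvariant_rpow_sum_le_of_one_le {n d : ℕ}
    (A : Fin d → Matrix (Fin n) (Fin n) ℂ) (hA : ∀ k, (A k).PosSemidef)
    (r : ℝ) (hr : 1 ≤ r)
    (N : Matrix (Fin n) (Fin n) ℂ → ℝ)
    (Nadd : ∀ X Y, N (X + Y) ≤ N X + N Y)
    (Nsmul : ∀ (c : ℂ) X, N (c • X) = ‖c‖ * N X)
    (Ndef : ∀ X, N X = 0 → X = 0)
    (Nui : ∀ (U W : Matrix.unitaryGroup (Fin n) ℂ) X,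
      N ((U : Matrix (Fin n) (Fin n) ℂ) * X * (W : Matrix (Fin n) (Fin n) ℂ)) = N X) :
    N (mpow (∑ k, A k) r) ≤ (d : ℝ) ^ (r - 1) * N (∑ k, mpow (A k) r) :=
  unitarilyInvariant_rpow_sum_le_of_one_le_general A hA r hr N Nadd Nsmul Nui
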